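/- arXiv:0710.2755 — 2 statements merged into one kernel-verified Lean document; each statement's English description precedes it below -/
import Mathlib

section
/- For each α with 0 < α < 1, the numbers p_k = (1+α)·Γ(k-1-α)/(Γ(1-α)·Γ(k+1)) for k = 2, 3, ... are nonnegative and sum to 1, and they satisfy Σ_{k≥2} p_k s^k = s + (1/α)(1-s)((1-s)^α - 1) for 0 ≤ s ≤ 1. -/
/-!
Write `T n = Γ(n - α) / (Γ(1 - α) Γ(n + 1))`. Then `p (n + 2) = T (n + 1) - T (n + 2)`, so the
`p_k` telescope to `T 1 - lim T = 1` (`n T n` is nonincreasing, so `T n ≤ 1 / n`). Moreover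
`α T n = -(-1)ⁿ C(α, n)` is minus the `n`-th coefficient of `(1 - s)^α`, so the generating
function of the `p_k` follows from the binomial series by shifting indices.
-/

open Real Filter Topology

theorem Ring.choose_succ_right_mul {K : Type*} [Field K] [CharZero K] (a : K) (k : ℕ) :
    Ring.choose a (k + 1) * (k + 1) = Ring.choose a k * (a - k) := by
  simp only [Ring.choose_eq_smul, smul_eq_mul, descPochhammer_succ_right, Polynomial.smeval_mul,
    Polynomial.smeval_sub, Polynomial.smeval_X, Polynomial.smeval_natCast, Nat.factorial_succ,
    nsmul_eq_mul]
  have : (k.factorial : K) ≠ 0 := by exact_mod_cast k.factorial_ne_zero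
  have : (k : K) + 1 ≠ 0 := by exact_mod_cast k.succ_ne_zero
  push_cast
  field_simp

theorem Real.hasSum_choose_mul_pow (a : ℝ) {x : ℝ} (hx : |x| < 1) :
    HasSum (fun n ↦ Ring.choose a n * x ^ n) ((1 + x) ^ a) := by
  have h := (one_add_rpow_hasFPowerSeriesOnBall_zero (a := a)).hasSum (y := x)
    (by simpa [edist_dist, Real.dist_eq] using hx)
  simpa [binomialSeries, FormalMultilinearSeries.ofScalars, mul_comm] using h

theorem HasSum.sub_mul_pow_add_two {t : ℕ → ℝ} {s R : ℝ}
    (h : HasSum (fun n ↦ t n * s ^ n) R) :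
    HasSum (fun n ↦ (t (n + 1) - t (n + 2)) * s ^ (n + 2)) ((s - 1) * (R - t 0) + t 1 * s) := by
  have h₁ := ((hasSum_nat_add_iff' 1).mpr h).mul_left s
  have h₂ := (hasSum_nat_add_iff' 2).mpr h
  have hR : (s - 1) * (R - t 0) + t 1 * s = s * (R - ∑ i ∈ Finset.range 1, t i * s ^ i) -
      (R - ∑ i ∈ Finset.range 2, t i * s ^ i) := by
    simp [Finset.sum_range_succ]
    ring
  rw [hR]
  exact (h₁.sub h₂).congr_fun fun n ↦ by ring

noncomputable def offspringProb (α : ℝ) (k : ℕ) : ℝ :=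
  (1 + α) * Gamma ((k : ℝ) - 1 - α) / (Gamma (1 - α) * Gamma ((k : ℝ) + 1))

/-- For `0 < α < 1` and `n ≥ 1` this is the tail `∑_{k > n} offspringProb α k`. -/
noncomputable def offspringTail (α : ℝ) (n : ℕ) : ℝ :=
  Gamma ((n : ℝ) - α) / (Gamma (1 - α) * Gamma ((n : ℝ) + 1))

section

variable {α : ℝ}

theorem natCast_add_one_ne (hα : α < 1) (n : ℕ) : (n : ℝ) + 1 ≠ α :=
  ne_of_gt (hα.trans_le (le_add_of_nonneg_left n.cast_nonneg))

theorem offspringProb_nonneg (h₁ : -1 ≤ α) (h₂ : α < 1) {k : ℕ} (hk : 2 ≤ k) :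
    0 ≤ offspringProb α k := by
  have hk' : (2 : ℝ) ≤ k := by exact_mod_cast hk
  have := Gamma_pos_of_pos (show 0 < (k : ℝ) - 1 - α by linarith)
  have := Gamma_pos_of_pos (show 0 < 1 - α by linarith)
  have := Gamma_pos_of_pos (show 0 < (k : ℝ) + 1 by linarith)
  unfold offspringProb
  have : 0 ≤ 1 + α := by linarith
  positivity

theorem offspringTail_one (hα : α < 1) : offspringTail α 1 = 1 := by
  have := (Gamma_pos_of_pos (show 0 < 1 - α by linarith)).ne'
  simp [offspringTail, one_add_one_eq_two, this]

theorem offspringTail_nonneg (hα : α < 1) {n : ℕ} (hn : 1 ≤ n) :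
    0 ≤ offspringTail α n := by
  have hn' : (1 : ℝ) ≤ n := by exact_mod_cast hn
  have := Gamma_pos_of_pos (show 0 < (n : ℝ) - α by linarith)
  have := Gamma_pos_of_pos (show 0 < 1 - α by linarith)
  have := Gamma_pos_of_pos (show 0 < (n : ℝ) + 1 by linarith)
  unfold offspringTail
  positivity

theorem offspringTail_succ_mul {n : ℕ} (hn : (n : ℝ) ≠ α) :
    offspringTail α (n + 1) * (n + 1) = offspringTail α n * (n - α) := by
  have hΓ : Gamma ((n : ℝ) + 1) ≠ 0 := (Gamma_pos_of_pos (by positivity)).ne'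
  have hn' : (n : ℝ) - α ≠ 0 := sub_ne_zero.mpr hn
  unfold offspringTail
  rw [Nat.cast_succ, show (n : ℝ) + 1 - α = n - α + 1 by ring, Gamma_add_one hn',
    Gamma_add_one (by positivity)]
  rcases eq_or_ne (Gamma (1 - α)) 0 with h | h
  · simp [h]
  · field_simp

theorem offspringProb_eq_sub {n : ℕ} (hn : (n : ℝ) + 1 ≠ α) :
    offspringProb α (n + 2) = offspringTail α (n + 1) - offspringTail α (n + 2) := by
  have hrec := offspringTail_succ_mul (α := α) (n := n + 1) (by exact_mod_cast hn)
  rw [show n + 1 + 1 = n + 2 from rfl] at hrec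
  push_cast at hrec
  have hΓ : Gamma ((n : ℝ) + 2) ≠ 0 := (Gamma_pos_of_pos (by positivity)).ne'
  have hn₂ : (n : ℝ) + 2 ≠ 0 := by positivity
  suffices offspringProb α (n + 2) * (n + 2) = (1 + α) * offspringTail α (n + 1) by
    rw [← mul_left_inj' hn₂, this]
    linear_combination hrec
  unfold offspringProb offspringTail
  push_cast
  rw [show (n : ℝ) + 2 - 1 - α = n + 1 - α by ring, show (n : ℝ) + 2 + 1 = n + 2 + 1 by ring,
    Gamma_add_one hn₂, show (n : ℝ) + 1 + 1 = n + 2 by ring]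
  rcases eq_or_ne (Gamma (1 - α)) 0 with h | h
  · simp [h]
  · field_simp

theorem offspringTail_eq_choose (hα : ∀ n : ℕ, α ≠ n) (n : ℕ) :
    offspringTail α n = -((-1) ^ n * Ring.choose α n) / α := by
  have hα₀ : α ≠ 0 := by exact_mod_cast hα 0
  induction n with
  | zero =>
    have h := Gamma_add_one (neg_ne_zero.mpr hα₀)
    rw [neg_add_eq_sub] at h
    have hΓ : Gamma (-α) ≠ 0 := Gamma_ne_zero fun m ↦ by simpa using hα m
    simp only [offspringTail, h, CharP.cast_eq_zero, zero_sub, zero_add, Gamma_one, mul_one,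
      pow_zero, Ring.choose_zero_right]
    field_simp
  | succ n ih =>
    have hn : (n : ℝ) + 1 ≠ 0 := by positivity
    rw [← mul_left_inj' hn]
    have := Ring.choose_succ_right_mul α n
    rw [offspringTail_succ_mul (hα n).symm, ih]
    linear_combination (-(-1) ^ n / α) * this

theorem offspringTail_succ_le (hα₀ : 0 ≤ α) (hα₁ : α < 1) (n : ℕ) :
    offspringTail α (n + 1) ≤ 1 / (n + 1) := by
  rw [le_div_iff₀ (by positivity)]
  induction n with
  | zero => simp [offspringTail_one hα₁]
  | succ n ih =>
    have := offspringTail_succ_mul (n := n + 1) (by exact_mod_cast natCast_add_one_ne hα₁ n)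
    push_cast at this ⊢
    rw [this]
    nlinarith [offspringTail_nonneg hα₁ (Nat.le_add_left 1 n)]

theorem tendsto_offspringTail (hα₀ : 0 ≤ α) (hα₁ : α < 1) :
    Tendsto (offspringTail α) atTop (𝓝 0) := by
  rw [← tendsto_add_atTop_iff_nat 1]
  exact squeeze_zero (fun n ↦ offspringTail_nonneg hα₁ (Nat.le_add_left 1 n))
    (offspringTail_succ_le hα₀ hα₁) tendsto_one_div_add_atTop_nhds_zero_nat

theorem hasSum_offspringTail_mul_pow (hα : ∀ n : ℕ, α ≠ n) {x : ℝ} (hx : |x| < 1) :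
    HasSum (fun n ↦ offspringTail α n * x ^ n) (-(1 - x) ^ α / α) := by
  have h := (hasSum_choose_mul_pow α (x := -x) (by rwa [abs_neg])).neg.div_const α
  rw [← sub_eq_add_neg] at h
  refine h.congr_fun fun n ↦ ?_
  rw [offspringTail_eq_choose hα, neg_pow, neg_div, neg_div]
  ring

theorem hasSum_offspringProb (hα₀ : 0 ≤ α) (hα₁ : α < 1) :
    HasSum (fun n ↦ offspringProb α (n + 2)) 1 := by
  rw [hasSum_iff_tendsto_nat_of_nonneg
    (fun n ↦ offspringProb_nonneg (by linarith) hα₁ (Nat.le_add_left 2 n))]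
  have hpartial (n : ℕ) :
      ∑ i ∈ Finset.range n, offspringProb α (i + 2) = 1 - offspringTail α (n + 1) := by
    simp only [offspringProb_eq_sub (natCast_add_one_ne hα₁ _)]
    rw [Finset.sum_range_sub' (fun i ↦ offspringTail α (i + 1)), offspringTail_one hα₁]
  simp only [hpartial]
  simpa using ((tendsto_add_atTop_iff_nat 1).mpr (tendsto_offspringTail hα₀ hα₁)).const_sub 1

theorem hasSum_offspringProb_mul_pow (hα : ∀ n : ℕ, α ≠ n) {s : ℝ} (hs : |s| < 1) :
    HasSum (fun n ↦ offspringProb α (n + 2) * s ^ (n + 2))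
      (s + (1 / α) * (1 - s) * ((1 - s) ^ α - 1)) := by
  have h := (hasSum_offspringTail_mul_pow hα hs).sub_mul_pow_add_two
  rw [offspringTail_eq_choose hα 0, offspringTail_eq_choose hα 1] at h
  have hsub (n : ℕ) :=
    offspringProb_eq_sub (α := α) (n := n) (by exact_mod_cast (hα (n + 1)).symm)
  simp only [hsub]
  convert h using 1
  have hα₀ : α ≠ 0 := by exact_mod_cast hα 0
  simp only [pow_zero, pow_one, Ring.choose_zero_right, Ring.choose_one_right]
  field_simp
  ring

end

/-- For `0 < α < 1` the numbers `p_k = (1+α)Γ(k-1-α)/(Γ(1-α)Γ(k+1))`, `k ≥ 2`, are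
nonnegative, sum to one, and have generating function `s + (1/α)(1-s)((1-s)^α - 1)`. -/
theorem stmt2 (α : ℝ) (hα0 : 0 < α) (hα1 : α < 1)
    (p : ℕ → ℝ)
    (hp : ∀ k : ℕ, 2 ≤ k →
      p k = (1 + α) * Real.Gamma ((k : ℝ) - 1 - α) /
        (Real.Gamma (1 - α) * Real.Gamma ((k : ℝ) + 1))) :
    (∀ k : ℕ, 2 ≤ k → 0 ≤ p k) ∧
    (∑' k : ℕ, p (k + 2) = 1) ∧
    ∀ s : ℝ, 0 ≤ s → s ≤ 1 →
      ∑' k : ℕ, p (k + 2) * s ^ (k + 2)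
        = s + (1 / α) * (1 - s) * ((1 - s) ^ α - 1) := by
  have hp₂ (k : ℕ) : p (k + 2) = offspringProb α (k + 2) := hp (k + 2) (Nat.le_add_left 2 k)
  have hα : ∀ n : ℕ, α ≠ n := by
    rintro (_ | n) h
    · exact hα0.ne' (by exact_mod_cast h)
    · push_cast at h
      linarith [n.cast_nonneg (α := ℝ)]
  refine ⟨fun k hk ↦ hp k hk ▸ offspringProb_nonneg (by linarith) hα1 hk, ?_, ?_⟩
  · simpa only [hp₂] using (hasSum_offspringProb hα0.le hα1).tsum_eq
  · intro s hs₀ hs₁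
    simp only [hp₂]
    rcases hs₁.lt_or_eq with hs₁ | rfl
    · exact (hasSum_offspringProb_mul_pow hα (abs_lt.mpr ⟨by linarith, hs₁⟩)).tsum_eq
    · simpa using (hasSum_offspringProb hα0.le hα1).tsum_eq
end

section
/- If 0 ≤ α₁ ≤ α₂ ≤ 1, then the offspring distribution ν_{α₁} stochastically dominates ν_{α₂}: P(ν_{α₂} > k) ≤ P(ν_{α₁} > k) for all integers k, where P(ν_α = k) = (1+α)Γ(k-1-α)/(Γ(1-α)Γ(k+1)) for 0 ≤ α < 1 and k ≥ 2, and P(ν_1 = 2) = 1. -/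
/-!
Summing the closed form of `P(ν_α = k)` telescopically, the tail `P(ν_α > m)` equals
`∏_{j=1}^{m-1} (j - α) / m!` (for `α < 1` this uses `Γ(m - α) = Γ(1 - α) ∏_{j=1}^{m-1} (j - α)`;
for `α = 1` both sides are the tail of the point mass at `2`). Every factor `j - α` is
nonnegative and decreasing in `α`, so the tail is decreasing in `α`. Comparison with `α = 0`,
whose tail is `1/m`, shows that the telescoping sum really converges to the tail.
-/

open Real

/-- Offspring law of the limit reduced process: for `0 ≤ α < 1`,
`P(ν_α = k) = (1+α)Γ(k-1-α)/(Γ(1-α)Γ(k+1))` for `k ≥ 2`; for `α = 1` the point mass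
at `2`. -/
noncomputable def pnu (α : ℝ) (k : ℕ) : ℝ :=
  if α = 1 then (if k = 2 then 1 else 0)
  else if 2 ≤ k then
    (1 + α) * Real.Gamma ((k : ℝ) - 1 - α) / (Real.Gamma (1 - α) * Real.Gamma ((k : ℝ) + 1))
  else 0

open Finset Filter Topology Nat

-- `nuSurvival α m = P(ν_α > m)`.
noncomputable def nuSurvival (α : ℝ) (m : ℕ) : ℝ :=
  (∏ j ∈ Ico 1 m, ((j : ℝ) - α)) / m !

theorem hasSum_sub_succ_of_antitone {f : ℕ → ℝ} (hf : Antitone f)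
    (h : Tendsto f atTop (𝓝 0)) : HasSum (fun n ↦ f n - f (n + 1)) (f 0) := by
  refine (hasSum_iff_tendsto_nat_of_nonneg (fun n ↦ sub_nonneg.2 (hf n.le_succ)) _).2 ?_
  simp_rw [Finset.sum_range_sub']
  simpa using (tendsto_const_nhds (x := f 0)).sub h

lemma nuSurvival_nonneg {α : ℝ} (h1 : α ≤ 1) (m : ℕ) : 0 ≤ nuSurvival α m := by
  refine div_nonneg (prod_nonneg fun j hj ↦ ?_) (by positivity)
  have : (1 : ℝ) ≤ j := by exact_mod_cast (mem_Ico.1 hj).1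
  linarith

lemma nuSurvival_le_of_le {α₁ α₂ : ℝ} (h12 : α₁ ≤ α₂) (h2 : α₂ ≤ 1) (m : ℕ) :
    nuSurvival α₂ m ≤ nuSurvival α₁ m := by
  refine div_le_div_of_nonneg_right (prod_le_prod (fun j hj ↦ ?_) fun j _ ↦ by linarith)
    (by positivity)
  have : (1 : ℝ) ≤ j := by exact_mod_cast (mem_Ico.1 hj).1
  linarith

lemma nuSurvival_zero_succ (m : ℕ) : nuSurvival 0 (m + 1) = 1 / (m + 1) := by
  have hprod : ∏ j ∈ Ico 1 (m + 1), ((j : ℝ) - 0) = m ! := by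
    simp_rw [sub_zero]
    rw [← prod_Ico_id_eq_factorial]
    push_cast
    rfl
  rw [nuSurvival, hprod, factorial_succ]
  push_cast
  field_simp

lemma tendsto_nuSurvival {α : ℝ} (h0 : 0 ≤ α) (h1 : α ≤ 1) :
    Tendsto (nuSurvival α) atTop (𝓝 0) := by
  rw [← tendsto_add_atTop_iff_nat 1]
  refine squeeze_zero (fun m ↦ nuSurvival_nonneg h1 _) (fun m ↦ ?_)
    tendsto_one_div_add_atTop_nhds_zero_nat
  rw [← nuSurvival_zero_succ]
  exact nuSurvival_le_of_le h0 h1 _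

lemma Real.Gamma_nat_add_one_sub {α : ℝ} (hα : α < 1) (m : ℕ) :
    Real.Gamma (m + 1 - α) = Real.Gamma (1 - α) * ∏ j ∈ Ico 1 (m + 1), ((j : ℝ) - α) := by
  induction m with
  | zero => simp
  | succ m ih =>
    have hne : (m : ℝ) + 1 - α ≠ 0 := by have := m.cast_nonneg (α := ℝ); linarith
    rw [prod_Ico_succ_top (by omega), ← mul_assoc, ← ih, Nat.cast_succ, mul_comm,
      ← Real.Gamma_add_one hne]
    ring_nf

lemma pnu_nonneg {α : ℝ} (h0 : 0 ≤ α) (h1 : α ≤ 1) (k : ℕ) : 0 ≤ pnu α k := by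
  unfold pnu
  split_ifs with hα _ hk
  · exact zero_le_one
  · exact le_rfl
  · have hk : (2 : ℝ) ≤ k := by exact_mod_cast hk
    have hα : α < 1 := h1.lt_of_ne hα
    have := Real.Gamma_pos_of_pos (show 0 < (k : ℝ) - 1 - α by linarith)
    have := Real.Gamma_pos_of_pos (show 0 < 1 - α by linarith)
    have := Real.Gamma_pos_of_pos (show 0 < (k : ℝ) + 1 by linarith)
    positivity
  · exact le_rfl

lemma pnu_succ_eq_nuSurvival_sub {α : ℝ} (h1 : α ≤ 1) (m : ℕ) :
    pnu α (m + 1) = nuSurvival α m - nuSurvival α (m + 1) := by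
  rcases h1.lt_or_eq with hα | rfl
  · rcases m with _ | n
    · simp [pnu, nuSurvival]
    · have hG : Real.Gamma (((n + 1 + 1 : ℕ) : ℝ) - 1 - α) =
          Real.Gamma (1 - α) * ∏ j ∈ Ico 1 (n + 1), ((j : ℝ) - α) := by
        rw [← Real.Gamma_nat_add_one_sub hα]; push_cast; ring_nf
      have hF : Real.Gamma (((n + 1 + 1 : ℕ) : ℝ) + 1) = (n + 2) ! := by
        exact_mod_cast Real.Gamma_nat_eq_factorial (n + 2)
      have := Real.Gamma_pos_of_pos (show 0 < 1 - α by linarith)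
      rw [pnu, if_neg hα.ne, if_pos (by omega), hG, hF, nuSurvival, nuSurvival,
        prod_Ico_succ_top (show 1 ≤ n + 1 by omega), factorial_succ (n + 1)]
      push_cast
      field_simp
      ring
  · rcases m with _ | _ | n
    · simp [pnu, nuSurvival]
    · simp [pnu, nuSurvival]
    · have h : ∀ p, 2 ≤ p → nuSurvival 1 p = 0 := fun p hp ↦ by
        rw [nuSurvival, prod_eq_zero (i := 1) (by simp; omega) (by simp), zero_div]
      simp [pnu, h]

theorem hasSum_pnu_gt {α : ℝ} (h0 : 0 ≤ α) (h1 : α ≤ 1) (k : ℕ) :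
    HasSum (fun i ↦ pnu α (k + 1 + i)) (nuSurvival α k) := by
  have hanti : Antitone fun i ↦ nuSurvival α (k + i) := antitone_nat_of_succ_le fun i ↦ by
    simpa [← add_assoc, pnu_succ_eq_nuSurvival_sub h1] using pnu_nonneg h0 h1 (k + i + 1)
  have hlim : Tendsto (fun i ↦ nuSurvival α (k + i)) atTop (𝓝 0) := by
    simpa only [add_comm k] using (tendsto_add_atTop_iff_nat k).2 (tendsto_nuSurvival h0 h1)
  convert hasSum_sub_succ_of_antitone hanti hlim using 2 with i
  · rw [add_right_comm, pnu_succ_eq_nuSurvival_sub h1, add_assoc]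
  · rw [add_zero]

/-- Stochastic domination: if `0 ≤ α₁ ≤ α₂ ≤ 1` then `P(ν_{α₂} > k) ≤ P(ν_{α₁} > k)`
for every `k`. -/
theorem stmt4 (α₁ α₂ : ℝ) (h0 : 0 ≤ α₁) (h12 : α₁ ≤ α₂) (h2 : α₂ ≤ 1) (k : ℕ) :
    (∑' i : ℕ, pnu α₂ (k + 1 + i)) ≤ ∑' i : ℕ, pnu α₁ (k + 1 + i) := by
  rw [(hasSum_pnu_gt (h0.trans h12) h2 k).tsum_eq, (hasSum_pnu_gt h0 (h12.trans h2) k).tsum_eq]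
  exact nuSurvival_le_of_le h12 h2 k
end
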